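/- A bounded sequence (f_n) in C(K, X) converges weakly to 0 if and only if for every t ∈ K the sequence (f_n(t)) converges weakly to 0 in X. -/

import Mathlib

open Filter Topology

section Defs

variable {Z : Type*} [NormedAddCommGroup Z] [NormedSpace ℝ Z]

/-- A sequence is weakly null: every continuous linear functional sends it to a null sequence. -/
def WeaklyNull (x : ℕ → Z) : Prop :=
  ∀ f : Z →L[ℝ] ℝ, Tendsto (fun n => f (x n)) atTop (𝓝 (0 : ℝ))

/-- A sequence is weakly `p`-summable: every functional sends it into `ℓ_p`. -/
def WeaklyPSummable (p : ENNReal) (x : ℕ → Z) : Prop :=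
  ∀ f : Z →L[ℝ] ℝ, Memℓp (fun n => f (x n)) p

/-- A set is limited: every weak*-null sequence of functionals tends to `0` uniformly on it. -/
def IsLimitedSet (A : Set Z) : Prop :=
  ∀ g : ℕ → Z →L[ℝ] ℝ, (∀ z : Z, Tendsto (fun k => g k z) atTop (𝓝 (0 : ℝ))) →
    ∀ ε > 0, ∃ N, ∀ k ≥ N, ∀ a ∈ A, |g k a| < ε

/-- A set is a Dunford–Pettis set: every weakly null sequence of functionals tends to `0`
uniformly on it. -/
def IsDPSet (A : Set Z) : Prop :=
  ∀ g : ℕ → Z →L[ℝ] ℝ, WeaklyNull g →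
    ∀ ε > 0, ∃ N, ∀ k ≥ N, ∀ a ∈ A, |g k a| < ε

end Defs

/-!
The map `f ↦ ((z, t) ↦ z (f t))` embeds `C(K, X)` isometrically into `C(B × K, ℝ)`, where `B` is
the closed unit ball of `X*` with its weak-* topology, a compact space by Banach–Alaoglu. By
Hahn–Banach every functional on `C(K, X)` extends along this embedding, and the images of the
`f n` are bounded and converge pointwise to `0`, so it suffices to treat real functions on a compact
space `S`. There a functional `ψ` is dominated by its variation `|ψ|`, a positive functional,
which the Riesz–Markov–Kakutani theorem represents by a finite measure `μ`; hence
`|ψ (F n)| ≤ ∫ |F n| dμ → 0` by dominated convergence.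
-/

open MeasureTheory
open scoped NNReal CompactlySupported

namespace ContinuousLinearMap

variable {S : Type*} [TopologicalSpace S] (ψ : C(S, ℝ) →L[ℝ] ℝ)

noncomputable def variation (g : C(S, ℝ≥0)) : ℝ :=
  sSup ((fun h => ψ h) '' {h | ∀ x, |h x| ≤ g x})

lemma variation_le {g : C(S, ℝ≥0)} {c : ℝ} (H : ∀ h : C(S, ℝ), (∀ x, |h x| ≤ g x) → ψ h ≤ c) :
    ψ.variation g ≤ c :=
  csSup_le ⟨ψ 0, 0, fun x => by simp, rfl⟩ (by rintro _ ⟨h, hh, rfl⟩; exact H h hh)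

variable [CompactSpace S]

lemma apply_le_of_abs_le {h : C(S, ℝ)} {c : ℝ} (hc : 0 ≤ c) (hh : ∀ x, |h x| ≤ c) :
    ψ h ≤ ‖ψ‖ * c :=
  calc ψ h ≤ ‖ψ‖ * ‖h‖ := (le_abs_self _).trans (ψ.le_opNorm h)
    _ ≤ ‖ψ‖ * c := by gcongr; exact (ContinuousMap.norm_le h hc).2 hh

variable {ψ}

lemma le_variation {g : C(S, ℝ≥0)} {h : C(S, ℝ)} (hh : ∀ x, |h x| ≤ g x) :
    ψ h ≤ ψ.variation g := by
  obtain ⟨c, hc⟩ := (isCompact_range g.continuous).bddAbove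
  refine le_csSup ⟨‖ψ‖ * c, ?_⟩ ⟨h, hh, rfl⟩
  rintro _ ⟨h', hh', rfl⟩
  exact ψ.apply_le_of_abs_le c.2 fun x => (hh' x).trans (by exact_mod_cast hc ⟨x, rfl⟩)

lemma variation_nonneg (g : C(S, ℝ≥0)) : 0 ≤ ψ.variation g := by
  simpa using le_variation (ψ := ψ) (h := 0) (g := g) (fun x => by simp)

lemma abs_le_variation {g : C(S, ℝ≥0)} {h : C(S, ℝ)} (hh : ∀ x, |h x| ≤ g x) :
    |ψ h| ≤ ψ.variation g := by
  have hneg : ψ (-h) ≤ ψ.variation g := le_variation fun x => by simpa using hh x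
  rw [map_neg] at hneg
  exact abs_le.2 ⟨by linarith, le_variation hh⟩

/-- Riesz decomposition: clamping `h` to `[-f, f]` splits it into pieces dominated by `f`
and `g`. -/
lemma variation_add (f g : C(S, ℝ≥0)) :
    ψ.variation (f + g) = ψ.variation f + ψ.variation g := by
  refine le_antisymm (ψ.variation_le fun h hh => ?_) ?_
  · let h₁ : C(S, ℝ) := ⟨fun x => max (-(f x : ℝ)) (min (h x) (f x)), by fun_prop⟩
    have hh₁ : ∀ x, |h₁ x| ≤ f x := fun x => by
      simp only [h₁, ContinuousMap.coe_mk, abs_le]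
      constructor <;> simp only [min_def, max_def] <;> split_ifs <;> linarith [(f x).2]
    have hh₂ : ∀ x, |(h - h₁) x| ≤ g x := fun x => by
      have := hh x
      simp only [h₁, ContinuousMap.sub_apply, ContinuousMap.coe_mk, ContinuousMap.add_apply,
        NNReal.coe_add, abs_le] at this ⊢
      constructor <;> simp only [min_def, max_def] <;> split_ifs <;> linarith [(f x).2, (g x).2]
    calc ψ h = ψ h₁ + ψ (h - h₁) := by rw [← map_add, add_sub_cancel]
      _ ≤ ψ.variation f + ψ.variation g := add_le_add (le_variation hh₁) (le_variation hh₂)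
  · suffices ∀ h₂ : C(S, ℝ), (∀ x, |h₂ x| ≤ g x) → ψ h₂ ≤ ψ.variation (f + g) - ψ.variation f by
      linarith [ψ.variation_le this]
    intro h₂ hh₂
    suffices ψ.variation f ≤ ψ.variation (f + g) - ψ h₂ by linarith
    refine ψ.variation_le fun h₁ hh₁ => ?_
    have : ψ (h₁ + h₂) ≤ ψ.variation (f + g) := le_variation fun x => by
      simpa using (abs_add_le (h₁ x) (h₂ x)).trans (add_le_add (hh₁ x) (hh₂ x))
    rw [map_add] at this
    linarith

lemma variation_smul_le (c : ℝ≥0) (g : C(S, ℝ≥0)) :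
    ψ.variation (c • g) ≤ c * ψ.variation g := by
  rcases eq_or_ne c 0 with rfl | hc
  · refine ψ.variation_le fun h hh => ?_
    have : h = 0 := by ext x; simpa using hh x
    simp [this]
  refine ψ.variation_le fun h hh => ?_
  have hc' : (0 : ℝ) < c := by positivity
  calc ψ h = c * ψ ((c⁻¹ : ℝ) • h) := by
        rw [map_smul, smul_eq_mul, ← mul_assoc, mul_inv_cancel₀ hc'.ne', one_mul]
    _ ≤ c * ψ.variation g := by
        refine mul_le_mul_of_nonneg_left (le_variation fun x => ?_) hc'.le
        have := hh x
        simp only [ContinuousMap.smul_apply, smul_eq_mul, NNReal.coe_mul,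
          abs_mul, abs_inv, abs_of_pos hc'] at this ⊢
        rw [inv_mul_le_iff₀ hc']
        exact this

lemma variation_smul (c : ℝ≥0) (g : C(S, ℝ≥0)) :
    ψ.variation (c • g) = c * ψ.variation g := by
  refine le_antisymm (variation_smul_le c g) ?_
  rcases eq_or_ne c 0 with rfl | hc
  · simpa using variation_nonneg _
  calc (c : ℝ) * ψ.variation g = c * ψ.variation (c⁻¹ • c • g) := by rw [inv_smul_smul₀ hc]
    _ ≤ c * (c⁻¹ * ψ.variation (c • g)) := by gcongr; exact variation_smul_le _ _
    _ = ψ.variation (c • g) := by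
        rw [← mul_assoc, NNReal.coe_inv, mul_inv_cancel₀ (by exact_mod_cast hc), one_mul]

variable (ψ) in
noncomputable def variationLinear : C_c(S, ℝ≥0) →ₗ[ℝ≥0] ℝ≥0 where
  toFun g := ⟨ψ.variation g.toContinuousMap, variation_nonneg _⟩
  map_add' f g := NNReal.eq (variation_add f.toContinuousMap g.toContinuousMap)
  map_smul' c g := NNReal.eq (variation_smul c g.toContinuousMap)

theorem exists_integral_eq_variation [T2Space S] [MeasurableSpace S] [BorelSpace S] :
    ∃ μ : Measure S, IsFiniteMeasure μ ∧ ∀ g : C(S, ℝ≥0), ψ.variation g = ∫ x, (g x : ℝ) ∂μ :=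
  ⟨NNRealRMK.rieszMeasure (variationLinear ψ), inferInstance, fun g =>
    (NNRealRMK.integral_rieszMeasure (variationLinear ψ)
      (CompactlySupportedContinuousMap.continuousMapEquiv g)).symm⟩

variable (ψ) in
theorem tendsto_apply_zero_of_norm_le [T2Space S] {F : ℕ → C(S, ℝ)} {M : ℝ} (hM : ∀ n, ‖F n‖ ≤ M)
    (hF : ∀ x, Tendsto (fun n => F n x) atTop (𝓝 0)) :
    Tendsto (fun n => ψ (F n)) atTop (𝓝 0) := by
  borelize S
  obtain ⟨μ, _, hμ⟩ := ψ.exists_integral_eq_variation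
  have hint : Tendsto (fun n => ∫ x, ‖F n x‖ ∂μ) atTop (𝓝 0) := by
    simpa using tendsto_integral_of_dominated_convergence (fun _ => M)
      (fun n => (F n).continuous.norm.aestronglyMeasurable) (integrable_const M)
      (fun n => ae_of_all _ fun x => by simpa using ((F n).norm_coe_le_norm x).trans (hM n))
      (ae_of_all _ fun x => (hF x).norm)
  refine squeeze_zero_norm (fun n => ?_) hint
  exact (abs_le_variation (g := ⟨fun x => ‖F n x‖₊, by fun_prop⟩) fun x => le_rfl).trans_eq
    (hμ _)

end ContinuousLinearMap

theorem LinearIsometry.exists_comp_eq {𝕜 E F : Type*} [RCLike 𝕜] [NormedAddCommGroup E]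
    [NormedSpace 𝕜 E] [NormedAddCommGroup F] [NormedSpace 𝕜 F] (J : E →ₗᵢ[𝕜] F)
    (φ : StrongDual 𝕜 E) : ∃ ψ : StrongDual 𝕜 F, ∀ x, ψ (J x) = φ x := by
  obtain ⟨ψ, hψ, -⟩ := exists_extension_norm_eq _
    (φ.comp J.equivRange.symm.toContinuousLinearEquiv.toContinuousLinearMap)
  exact ⟨ψ, fun x => by simpa using hψ (J.equivRange x)⟩

namespace WeakDual

variable (X : Type*) [NormedAddCommGroup X] [NormedSpace ℝ X]

def closedUnitBall : Set (WeakDual ℝ X) := toStrongDual ⁻¹' Metric.closedBall 0 1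

instance : CompactSpace (closedUnitBall X) :=
  isCompact_iff_compactSpace.mp (isCompact_closedBall (0 : StrongDual ℝ X) 1)

variable {X}

lemma lipschitzWith_one_of_mem_closedUnitBall (z : closedUnitBall X) :
    LipschitzWith 1 (toStrongDual (z : WeakDual ℝ X)) :=
  (toStrongDual (z : WeakDual ℝ X)).lipschitz.weaken <| by
    simpa [closedUnitBall, ← NNReal.coe_le_coe] using z.2

lemma continuous_closedUnitBall_apply :
    Continuous fun p : closedUnitBall X × X => (p.1 : WeakDual ℝ X) p.2 :=
  continuous_prod_of_continuous_lipschitzWith' _ 1 lipschitzWith_one_of_mem_closedUnitBall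
    fun x => (eval_continuous x).comp continuous_subtype_val

lemma exists_closedUnitBall_apply_eq_norm (x : X) :
    ∃ z : closedUnitBall X, (z : WeakDual ℝ X) x = ‖x‖ := by
  obtain ⟨g, hg, hgx⟩ := exists_dual_vector'' ℝ x
  exact ⟨⟨toStrongDual.symm g, by simpa [closedUnitBall] using hg⟩, hgx⟩

end WeakDual

section DualPairing

open WeakDual

variable {K X : Type*} [TopologicalSpace K] [NormedAddCommGroup X] [NormedSpace ℝ X]

namespace ContinuousMap

noncomputable def dualPairing (f : C(K, X)) : C(closedUnitBall X × K, ℝ) :=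
  ⟨fun p => (p.1 : WeakDual ℝ X) (f p.2),
    continuous_closedUnitBall_apply.comp (continuous_fst.prodMk (f.continuous.comp continuous_snd))⟩

@[simp]
lemma dualPairing_apply (f : C(K, X)) (p : closedUnitBall X × K) :
    f.dualPairing p = (p.1 : WeakDual ℝ X) (f p.2) :=
  rfl

variable [CompactSpace K]

lemma norm_dualPairing (f : C(K, X)) : ‖f.dualPairing‖ = ‖f‖ := by
  refine le_antisymm ((norm_le _ (norm_nonneg f)).2 fun p => ?_)
    ((norm_le _ (norm_nonneg _)).2 fun t => ?_)
  · calc ‖f.dualPairing p‖ ≤ 1 * ‖f p.2‖ :=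
          (lipschitzWith_one_of_mem_closedUnitBall p.1).norm_le_mul (map_zero _) _
      _ ≤ ‖f‖ := by rw [one_mul]; exact f.norm_coe_le_norm p.2
  · obtain ⟨z, hz⟩ := exists_closedUnitBall_apply_eq_norm (f t)
    calc ‖f t‖ = ‖f.dualPairing (z, t)‖ := by rw [dualPairing_apply, hz, norm_norm]
      _ ≤ ‖f.dualPairing‖ := norm_coe_le_norm _ _

variable (K X) in
noncomputable def dualPairingIsometry : C(K, X) →ₗᵢ[ℝ] C(closedUnitBall X × K, ℝ) where
  toFun := dualPairing
  map_add' f g := by ext; simp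
  map_smul' c f := by ext; simp
  norm_map' := norm_dualPairing

end ContinuousMap

theorem ContinuousMap.weaklyNull_of_forall_weaklyNull_apply [CompactSpace K] [T2Space K]
    {f : ℕ → C(K, X)} {M : ℝ} (hM : ∀ n, ‖f n‖ ≤ M) (h : ∀ t, WeaklyNull fun n => f n t) :
    WeaklyNull f := by
  intro φ
  obtain ⟨ψ, hψ⟩ := (dualPairingIsometry K X).exists_comp_eq φ
  simp only [← hψ]
  exact ψ.tendsto_apply_zero_of_norm_le (fun n => (f n).norm_dualPairing.trans_le (hM n))
    fun p => h p.2 (toStrongDual p.1)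

end DualPairing

theorem WeaklyNull.map {Z W : Type*} [NormedAddCommGroup Z] [NormedSpace ℝ Z]
    [NormedAddCommGroup W] [NormedSpace ℝ W] {x : ℕ → Z} (hx : WeaklyNull x) (T : Z →L[ℝ] W) :
    WeaklyNull fun n => T (x n) :=
  fun g => hx (g.comp T)

theorem stmt6_general {K X : Type*} [TopologicalSpace K] [CompactSpace K] [T2Space K]
    [NormedAddCommGroup X] [NormedSpace ℝ X]
    (f : ℕ → C(K, X)) (M : ℝ) (hf : ∀ n, ‖f n‖ ≤ M) :
    WeaklyNull f ↔ ∀ t : K, WeaklyNull (fun n => f n t) :=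
  ⟨fun h t => h.map (ContinuousMap.evalCLM ℝ t),
    ContinuousMap.weaklyNull_of_forall_weaklyNull_apply hf⟩

theorem stmt6 {K X : Type*} [TopologicalSpace K] [CompactSpace K] [T2Space K]
    [NormedAddCommGroup X] [NormedSpace ℝ X] [CompleteSpace X]
    (f : ℕ → C(K, X)) (M : ℝ) (hf : ∀ n, ‖f n‖ ≤ M) :
    WeaklyNull f ↔ ∀ t : K, WeaklyNull (fun n => f n t) :=
  stmt6_general f M hf
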